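/- Let S be a Γ-semigroup and γ₀ ∈ Γ such that S_{γ₀} is completely simple. Then for every γ ∈ Γ, the semigroup S_γ is completely regular: every element lies in a subgroup of S_γ. -/
import Mathlib


open FreeSemigroup

section GammaSemigroup

variable {S Γ : Type}

/-- One-step rewriting on words over S ⊕ Γ. -/
inductive GStep (m : S → Γ → S → S) (γ₀ : Γ) : List (S ⊕ Γ) → List (S ⊕ Γ) → Prop
  | gg (u v : List (S ⊕ Γ)) (γ₁ γ₂ : Γ) :
      GStep m γ₀ (u ++ Sum.inr γ₁ :: Sum.inr γ₂ :: v) (u ++ Sum.inr γ₁ :: v)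
  | xgy (u v : List (S ⊕ Γ)) (x : S) (γ : Γ) (y : S) :
      GStep m γ₀ (u ++ Sum.inl x :: Sum.inr γ :: Sum.inl y :: v) (u ++ Sum.inl (m x γ y) :: v)
  | xy (u v : List (S ⊕ Γ)) (x y : S) :
      GStep m γ₀ (u ++ Sum.inl x :: Sum.inl y :: v) (u ++ Sum.inl (m x γ₀ y) :: v)

/-- The defining relations on the free semigroup on S ⊕ Γ. -/
def GRel (m : S → Γ → S → S) (γ₀ : Γ) :
    FreeSemigroup (S ⊕ Γ) → FreeSemigroup (S ⊕ Γ) → Prop :=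
  fun a b =>
    (∃ γ₁ γ₂ : Γ, a = of (Sum.inr γ₁) * of (Sum.inr γ₂) ∧ b = of (Sum.inr γ₁)) ∨
    (∃ (x y : S) (γ : Γ), a = of (Sum.inl x) * of (Sum.inr γ) * of (Sum.inl y) ∧
      b = of (Sum.inl (m x γ y))) ∨
    (∃ x y : S, a = of (Sum.inl x) * of (Sum.inl y) ∧ b = of (Sum.inl (m x γ₀ y)))

/-- The congruence generated by the defining relations. -/
def GCon (m : S → Γ → S → S) (γ₀ : Γ) : Con (FreeSemigroup (S ⊕ Γ)) := conGen (GRel m γ₀)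

/-- The universal semigroup Σ of the Γ-semigroup S. -/
abbrev USem (m : S → Γ → S → S) (γ₀ : Γ) := (GCon m γ₀).Quotient

/-- The canonical map μ : S → Σ. -/
def gmu (m : S → Γ → S → S) (γ₀ : Γ) (x : S) : USem m γ₀ :=
  ((of (Sum.inl x) : FreeSemigroup (S ⊕ Γ)) : (GCon m γ₀).Quotient)

/-- The canonical map Γ → Σ. -/
def giota (m : S → Γ → S → S) (γ₀ : Γ) (γ : Γ) : USem m γ₀ :=
  ((of (Sum.inr γ) : FreeSemigroup (S ⊕ Γ)) : (GCon m γ₀).Quotient)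

/-- Principal left ideal of an element of a semigroup. -/
def pLeft {T : Type} [Semigroup T] (a : T) : Set T := {w | ∃ t : T, w = t * a} ∪ {a}

/-- Principal right ideal of an element of a semigroup. -/
def pRight {T : Type} [Semigroup T] (a : T) : Set T := {w | ∃ t : T, w = a * t} ∪ {a}

/-- Principal left ideal in the Γ-semigroup: SΓx ∪ {x}. -/
def pLeftG (m : S → Γ → S → S) (x : S) : Set S := {y | ∃ (s : S) (γ : Γ), y = m s γ x} ∪ {x}

/-- Principal right ideal in the Γ-semigroup: xΓS ∪ {x}. -/
def pRightG (m : S → Γ → S → S) (x : S) : Set S := {y | ∃ (γ : Γ) (s : S), y = m x γ s} ∪ {x}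

/-- Green's H relation on the Γ-semigroup. -/
def HrelG (m : S → Γ → S → S) (a b : S) : Prop := pLeftG m a = pLeftG m b ∧ pRightG m a = pRightG m b

/-- S_δ is a simple semigroup: its only two-sided ideal is S itself. -/
def SimpleAt (m : S → Γ → S → S) (δ : Γ) : Prop :=
  ∀ J : Set S, J.Nonempty → (∀ t : S, ∀ j ∈ J, m t δ j ∈ J ∧ m j δ t ∈ J) → J = Set.univ

/-- e is an idempotent of S_δ. -/
def IdemAt (m : S → Γ → S → S) (δ : Γ) (e : S) : Prop := m e δ e = e

/-- e is a primitive idempotent of S_δ. -/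
def PrimAt (m : S → Γ → S → S) (δ : Γ) (e : S) : Prop :=
  IdemAt m δ e ∧ ∀ f, IdemAt m δ f → m e δ f = f → m f δ e = f → f = e

/-- S_δ is completely simple. -/
def CSimpleAt (m : S → Γ → S → S) (δ : Γ) : Prop := SimpleAt m δ ∧ ∃ e, PrimAt m δ e

/-- S_δ has no zero element. -/
def NoZeroAt (m : S → Γ → S → S) (δ : Γ) : Prop := ¬ ∃ z : S, ∀ t : S, m z δ t = z ∧ m t δ z = z

/-- L is a left ideal of S_δ. -/
def LIdealAt (m : S → Γ → S → S) (δ : Γ) (L : Set S) : Prop :=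
  L.Nonempty ∧ ∀ t : S, ∀ l ∈ L, m t δ l ∈ L

/-- L is a minimal left ideal of S_δ. -/
def MinLIdealAt (m : S → Γ → S → S) (δ : Γ) (L : Set S) : Prop :=
  LIdealAt m δ L ∧ ∀ L' ⊆ L, LIdealAt m δ L' → L' = L

/-- S_δ is a group. -/
def GroupAt (m : S → Γ → S → S) (δ : Γ) : Prop :=
  ∃ e : S, (∀ a, m e δ a = a ∧ m a δ e = a) ∧ ∀ a, ∃ b, m a δ b = e ∧ m b δ a = e

/-- G is a subgroup (a sub-semigroup that is a group) of the semigroup T. -/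
def IsSubgroupOf {T : Type} [Semigroup T] (G : Set T) : Prop :=
  (∀ a ∈ G, ∀ b ∈ G, a * b ∈ G) ∧
  ∃ e ∈ G, (∀ g ∈ G, e * g = g ∧ g * e = g) ∧ ∀ g ∈ G, ∃ h ∈ G, g * h = e ∧ h * g = e

/-- The set Σ' = Σ \ Γ. -/
def USem' (m : S → Γ → S → S) (γ₀ : Γ) : Set (USem m γ₀) := {w | ¬ ∃ γ : Γ, w = giota m γ₀ γ}

end GammaSemigroup

theorem stmt (S Γ : Type) [Nonempty S] [Nonempty Γ] (m : S → Γ → S → S)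
    (assoc : ∀ (a b c : S) (α β : Γ), m (m a α b) β c = m a α (m b β c)) (γ₀ : Γ) (hcs : CSimpleAt m γ₀) :
    ∀ (γ : Γ) (a : S), ∃ x : S, m (m a γ x) γ a = a ∧ m a γ x = m x γ a := by
  obtain ⟨hsimple, e, hee, hprim⟩ := hcs
  have hee' : m e γ₀ e = e := hee
  -- F1 : every b is in S∘z∘S
  have F1 : ∀ z b : S, ∃ u v : S, b = m (m u γ₀ z) γ₀ v := by
    intro z b
    have h := hsimple {w : S | ∃ u v : S, w = m (m u γ₀ z) γ₀ v}
      ⟨m (m z γ₀ z) γ₀ z, z, z, rfl⟩ ?_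
    · have hb : b ∈ (Set.univ : Set S) := Set.mem_univ b
      rw [← h] at hb
      exact hb
    · rintro t j ⟨u, v, rfl⟩
      exact ⟨⟨m t γ₀ u, v, by simp only [assoc]⟩, ⟨u, m v γ₀ t, by simp only [assoc]⟩⟩
  -- group inverses in eSe
  have Ginv : ∀ g : S, m e γ₀ g = g → m g γ₀ e = g →
      ∃ h : S, m e γ₀ h = h ∧ m h γ₀ e = h ∧ m g γ₀ h = e ∧ m h γ₀ g = e := by
    intro g heg hge
    obtain ⟨u₁, v₁, hE⟩ := F1 g e
    have heeC : ∀ (β : Γ) (t : S), m e γ₀ (m e β t) = m e β t := fun β t => by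
      rw [← assoc, hee']
    have hegC : ∀ (β : Γ) (t : S), m e γ₀ (m g β t) = m g β t := fun β t => by
      rw [← assoc, heg]
    have hgeC : ∀ (β : Γ) (t : S), m g γ₀ (m e β t) = m g β t := fun β t => by
      rw [← assoc, hge]
    have hEb : m u₁ γ₀ (m g γ₀ v₁) = e := by rw [← assoc, ← hE]
    have hEc : ∀ (β : Γ) (t : S), m u₁ γ₀ (m g γ₀ (m v₁ β t)) = m e β t := fun β t => by
      rw [← assoc, ← assoc, ← hE]
    set u' : S := m (m e γ₀ u₁) γ₀ e with hu'
    set v' : S := m (m e γ₀ v₁) γ₀ e with hv'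
    have hfi : m (m (m g γ₀ v') γ₀ u') γ₀ (m (m g γ₀ v') γ₀ u') = m (m g γ₀ v') γ₀ u' := by
      rw [hu', hv']; simp only [assoc, hee', heg, hge, heeC, hegC, hgeC, hEb, hEc]
    have hef : m e γ₀ (m (m g γ₀ v') γ₀ u') = m (m g γ₀ v') γ₀ u' := by
      rw [hu', hv']; simp only [assoc, hee', heg, hge, heeC, hegC, hgeC, hEb, hEc]
    have hfe : m (m (m g γ₀ v') γ₀ u') γ₀ e = m (m g γ₀ v') γ₀ u' := by
      rw [hu', hv']; simp only [assoc, hee', heg, hge, heeC, hegC, hgeC, hEb, hEc]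
    have hfE : m (m g γ₀ v') γ₀ u' = e := hprim _ hfi hef hfe
    have hfi' : m (m (m v' γ₀ u') γ₀ g) γ₀ (m (m v' γ₀ u') γ₀ g) = m (m v' γ₀ u') γ₀ g := by
      rw [hu', hv']; simp only [assoc, hee', heg, hge, heeC, hegC, hgeC, hEb, hEc]
    have hef' : m e γ₀ (m (m v' γ₀ u') γ₀ g) = m (m v' γ₀ u') γ₀ g := by
      rw [hu', hv']; simp only [assoc, hee', heg, hge, heeC, hegC, hgeC, hEb, hEc]
    have hfe' : m (m (m v' γ₀ u') γ₀ g) γ₀ e = m (m v' γ₀ u') γ₀ g := by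
      rw [hu', hv']; simp only [assoc, hee', heg, hge, heeC, hegC, hgeC, hEb, hEc]
    have hf'E : m (m v' γ₀ u') γ₀ g = e := hprim _ hfi' hef' hfe'
    refine ⟨m v' γ₀ u', ?_, ?_, ?_, hf'E⟩
    · rw [hu', hv']; simp only [assoc, hee', heg, hge, heeC, hegC, hgeC, hEb, hEc]
    · rw [hu', hv']; simp only [assoc, hee', heg, hge, heeC, hegC, hgeC, hEb, hEc]
    · rw [← assoc g v' u' γ₀ γ₀]; exact hfE
  -- main argument
  intro γ a
  obtain ⟨u₀, v₀, ha⟩ := F1 e a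
  obtain ⟨u, hu⟩ : ∃ u : S, u = m u₀ γ₀ e := ⟨_, rfl⟩
  obtain ⟨v, hv⟩ : ∃ v : S, v = m e γ₀ v₀ := ⟨_, rfl⟩
  rw [← hu] at ha
  have hue : m u γ₀ e = u := by rw [hu, assoc, hee']
  have hev : m e γ₀ v = v := by rw [hv, ← assoc, hee']
  have huv : a = m u γ₀ v := by
    rw [ha, hv, ← assoc, hue]
  have heq : m e γ₀ (m v γ u) = m v γ u := by rw [← assoc, hev]
  have hqe : m (m v γ u) γ₀ e = m v γ u := by rw [assoc, hue]
  obtain ⟨h, heh, hhe, hqh, hhq⟩ := Ginv (m v γ u) heq hqe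
  have hueC : ∀ (β : Γ) (t : S), m u γ₀ (m e β t) = m u β t := fun β t => by
    rw [← assoc, hue]
  have hevC : ∀ (β : Γ) (t : S), m e γ₀ (m v β t) = m v β t := fun β t => by
    rw [← assoc, hev]
  have hehC : ∀ (β : Γ) (t : S), m e γ₀ (m h β t) = m h β t := fun β t => by
    rw [← assoc, heh]
  have hheC : ∀ (β : Γ) (t : S), m h γ₀ (m e β t) = m h β t := fun β t => by
    rw [← assoc, hhe]
  have hqhB : m v γ (m u γ₀ h) = e := by rw [← assoc]; exact hqh
  have hqhC : ∀ (β : Γ) (t : S), m v γ (m u γ₀ (m h β t)) = m e β t := fun β t => by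
    rw [← assoc, ← assoc]; exact hqh ▸ rfl
  have hhqB : m h γ₀ (m v γ u) = e := hhq
  have hhqC : ∀ (β : Γ) (t : S), m h γ₀ (m v γ (m u β t)) = m e β t := fun β t => by
    rw [← hhq, assoc, assoc]
  refine ⟨m u γ₀ (m h γ₀ (m h γ₀ v)), ?_, ?_⟩
  · rw [huv]
    simp only [assoc, hee', hue, hev, heh, hhe, hueC, hevC, hehC, hheC, hqhB, hqhC, hhqB, hhqC]
  · rw [huv]
    simp only [assoc, hee', hue, hev, heh, hhe, hueC, hevC, hehC, hheC, hqhB, hqhC, hhqB, hhqC]
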